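/- In the three-state counterexample gambling game, assume 0 lies in the closure of I∖{0} and 0 lies in the closure of J∖{0}. Then a function v: X×Y → ℝ is excessive, depressive, and satisfies P1 and P2, if and only if there exists x ∈ [0,1] such that v(a,a') = v(a,b') = v(b,a') = v(b,b') = x, v(a,c') = v(b,c') = 1, and v(c,a') = v(c,b') = v(c,c') = 0. -/

import Mathlib

open MeasureTheory Set Filter Topology

noncomputable section
namespace GG

abbrev PM (S : Type*) [MeasurableSpace S] := MeasureTheory.ProbabilityMeasure S

variable {S : Type*} [MeasurableSpace S]

/-- Dirac probability measure. -/
def dirac (s : S) : PM S := ⟨MeasureTheory.Measure.dirac s, inferInstance⟩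

/-- Integral of a function against a probability measure (the affine extension `f̃`). -/
def iPM (f : S → ℝ) (p : PM S) : ℝ := ∫ s, f s ∂(p : MeasureTheory.Measure S)

/-- `r` is the mixture `t p + (1-t) q`. -/
def IsMix (t : NNReal) (p q r : PM S) : Prop :=
  (r : MeasureTheory.Measure S)
    = (t : ENNReal) • (p : MeasureTheory.Measure S)
      + ((1 : ENNReal) - (t : ENNReal)) • (q : MeasureTheory.Measure S)

/-- Convexity of a set of probability measures. -/
def PMConvex (A : Set (PM S)) : Prop :=
  ∀ p ∈ A, ∀ q ∈ A, ∀ t : NNReal, t ≤ 1 → ∀ r : PM S, IsMix t p q r → r ∈ A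

/-- Convexity of a set of pairs of probability measures. -/
def PMConvex2 (A : Set (PM S × PM S)) : Prop :=
  ∀ a ∈ A, ∀ b ∈ A, ∀ t : NNReal, t ≤ 1 → ∀ c : PM S × PM S,
    IsMix t a.1 b.1 c.1 → IsMix t a.2 b.2 c.2 → c ∈ A

/-- Convex hull of a set of probability measures. -/
def convexHullPM (A : Set (PM S)) : Set (PM S) := ⋂₀ {T | A ⊆ T ∧ PMConvex T}

/-- Convex hull of a set of pairs of probability measures. -/
def convexHull2 (A : Set (PM S × PM S)) : Set (PM S × PM S) := ⋂₀ {T | A ⊆ T ∧ PMConvex2 T}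

/-- Kantorovich–Rubinstein distance. -/
def dKR {S : Type*} [MeasurableSpace S] [PseudoMetricSpace S] (p q : PM S) : ℝ :=
  sSup {r | ∃ f : S → ℝ, LipschitzWith 1 f ∧ r = |iPM f p - iPM f q|}

def argmaxOn {α : Type*} (f : α → ℝ) (A : Set α) : Set α := {p ∈ A | ∀ q ∈ A, f q ≤ f p}

def argminOn {α : Type*} (f : α → ℝ) (A : Set α) : Set α := {p ∈ A | ∀ q ∈ A, f p ≤ f q}

section Topo

variable [TopologicalSpace S] [OpensMeasurableSpace S]

/-- Graph of the linear extension `Γ̃`: the closed convex hull of the graph of `Γ`. -/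
def tGraph (Γ : S → Set (PM S)) : Set (PM S × PM S) :=
  closure (convexHull2 {z | ∃ x : S, z.1 = dirac x ∧ z.2 ∈ Γ x})

/-- The linear extension `Γ̃ : Δ(S) ⇉ Δ(S)`. -/
def tStep (Γ : S → Set (PM S)) (p : PM S) : Set (PM S) := {q | (p, q) ∈ tGraph Γ}

/-- Iterates `Γ̃ⁿ`, with `Γ̃⁰(p) = {p}` and `Γ̃^{n+1} = Γ̃ⁿ ∘ Γ̃`. -/
def tIter (Γ : S → Set (PM S)) : ℕ → PM S → Set (PM S)
  | 0, p => {p}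
  | n + 1, p => {r | ∃ q ∈ tStep Γ p, r ∈ tIter Γ n q}

/-- The reachable set `Γ^∞(x)`: closure of `⋃ₙ Γ̃ⁿ(δ_x)`. -/
def reach (Γ : S → Set (PM S)) (x : S) : Set (PM S) :=
  closure (⋃ n : ℕ, tIter Γ n (dirac x))

/-- There is a bounded measurable lower semicontinuous `φ` whose (expectation) argmax over
`R x` is exactly `{δ_x}`, for every `x`. -/
def AcyclicFor (R : S → Set (PM S)) : Prop :=
  ∃ φ : S → ℝ, Measurable φ ∧ (∃ C : ℝ, ∀ s, |φ s| ≤ C) ∧ LowerSemicontinuous φ ∧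
    ∀ x : S, argmaxOn (iPM φ) (R x) = {dirac x}

/-- There is a bounded measurable upper semicontinuous `ψ` whose (expectation) argmin over
`R y` is exactly `{δ_y}`, for every `y`. -/
def AcyclicForMin (R : S → Set (PM S)) : Prop :=
  ∃ ψ : S → ℝ, Measurable ψ ∧ (∃ C : ℝ, ∀ s, |ψ s| ≤ C) ∧ UpperSemicontinuous ψ ∧
    ∀ y : S, argminOn (iPM ψ) (R y) = {dirac y}

end Topo

section TwoPlayers

variable {X Y : Type*} [MeasurableSpace X] [MeasurableSpace Y]

/-- The bi-affine extension `ṽ(p,q) = ∫∫ v dp dq`. -/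
def iXY (v : X × Y → ℝ) (p : PM X) (q : PM Y) : ℝ :=
  ∫ x, ∫ y, v (x, y) ∂(q : MeasureTheory.Measure Y) ∂(p : MeasureTheory.Measure X)

/-- `v` is excessive: `v(x,y) = max_{p ∈ Γ(x)} ṽ(p,y)`. -/
def Excessive (Γ : X → Set (PM X)) (v : X × Y → ℝ) : Prop :=
  ∀ x : X, ∀ y : Y, IsGreatest ((fun p => iXY v p (dirac y)) '' Γ x) (v (x, y))

/-- `v` is depressive: `v(x,y) = min_{q ∈ Λ(y)} ṽ(x,q)`. -/
def Depressive (Λ : Y → Set (PM Y)) (v : X × Y → ℝ) : Prop :=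
  ∀ x : X, ∀ y : Y, IsLeast ((fun q => iXY v (dirac x) q) '' Λ y) (v (x, y))

/-- `v` is balanced: `v(x,y) = max_{p ∈ Γ(x)} min_{q ∈ Λ(y)} ṽ(p,q)
    = min_{q ∈ Λ(y)} max_{p ∈ Γ(x)} ṽ(p,q)`. -/
def Balanced (Γ : X → Set (PM X)) (Λ : Y → Set (PM Y)) (v : X × Y → ℝ) : Prop :=
  ∀ x : X, ∀ y : Y,
    IsGreatest {r | ∃ p ∈ Γ x, IsLeast (iXY v p '' Λ y) r} (v (x, y)) ∧
    IsLeast {r | ∃ q ∈ Λ y, IsGreatest ((fun p => iXY v p q) '' Γ x) r} (v (x, y))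

variable [TopologicalSpace X] [OpensMeasurableSpace X] [TopologicalSpace Y] [OpensMeasurableSpace Y]

/-- Property P1: for all `(x,y)` there is `p ∈ Γ^∞(x)` with `v(x,y) = ṽ(p,y) ≤ ũ(p,y)`. -/
def P1 (Γ : X → Set (PM X)) (u v : X × Y → ℝ) : Prop :=
  ∀ x : X, ∀ y : Y, ∃ p ∈ reach Γ x,
    v (x, y) = iXY v p (dirac y) ∧ iXY v p (dirac y) ≤ iXY u p (dirac y)

/-- Property P2: for all `(x,y)` there is `q ∈ Λ^∞(y)` with `v(x,y) = ṽ(x,q) ≥ ũ(x,q)`. -/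
def P2 (Λ : Y → Set (PM Y)) (u v : X × Y → ℝ) : Prop :=
  ∀ x : X, ∀ y : Y, ∃ q ∈ reach Λ y,
    v (x, y) = iXY v (dirac x) q ∧ iXY u (dirac x) q ≤ iXY v (dirac x) q

/-- `w` satisfies the Shapley fixed point equation for discount factor `lam`:
`w(x,y) = max_{p∈Γ(x)} min_{q∈Λ(y)} (λ u(x,y) + (1-λ) w̃(p,q))
        = min_{q∈Λ(y)} max_{p∈Γ(x)} (λ u(x,y) + (1-λ) w̃(p,q))`. -/
def ShapleyEq (Γ : X → Set (PM X)) (Λ : Y → Set (PM Y)) (u : X × Y → ℝ)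
    (lam : ℝ) (w : X × Y → ℝ) : Prop :=
  ∀ x : X, ∀ y : Y,
    IsGreatest {r | ∃ p ∈ Γ x,
      IsLeast ((fun q => lam * u (x, y) + (1 - lam) * iXY w p q) '' Λ y) r} (w (x, y)) ∧
    IsLeast {r | ∃ q ∈ Λ y,
      IsGreatest ((fun p => lam * u (x, y) + (1 - lam) * iXY w p q) '' Γ x) r} (w (x, y))

end TwoPlayers

/-- A standard gambling game: compact metric state spaces, continuous payoff,
continuous transition multifunctions with nonempty convex compact values,
leavable and non expansive. -/
structure StdGame (X Y : Type*) [MetricSpace X] [MeasurableSpace X] [OpensMeasurableSpace X]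
    [MetricSpace Y] [MeasurableSpace Y] [OpensMeasurableSpace Y] where
  G : X → Set (PM X)
  L : Y → Set (PM Y)
  u : X × Y → ℝ
  u_cont : Continuous u
  G_ne : ∀ x, (G x).Nonempty
  G_cvx : ∀ x, PMConvex (G x)
  G_cpt : ∀ x, IsCompact (G x)
  G_cont : ∀ ε : ℝ, 0 < ε → ∃ α : ℝ, 0 < α ∧ ∀ x x' : X, dist x x' ≤ α →
    ∀ p ∈ G x, ∃ p' ∈ G x', dKR p p' ≤ ε
  G_leav : ∀ x, dirac x ∈ G x
  G_nonexp : ∀ x x' : X, ∀ p ∈ G x, ∃ p' ∈ G x', dKR p p' ≤ dist x x'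
  L_ne : ∀ y, (L y).Nonempty
  L_cvx : ∀ y, PMConvex (L y)
  L_cpt : ∀ y, IsCompact (L y)
  L_cont : ∀ ε : ℝ, 0 < ε → ∃ α : ℝ, 0 < α ∧ ∀ y y' : Y, dist y y' ≤ α →
    ∀ q ∈ L y, ∃ q' ∈ L y', dKR q q' ≤ ε
  L_leav : ∀ y, dirac y ∈ L y
  L_nonexp : ∀ y y' : Y, ∀ q ∈ L y, ∃ q' ∈ L y', dKR q q' ≤ dist y y'

end GG

namespace GG

/-! The three-state counterexample gambling game. -/

/-- Three states a, b, c (Player 2 uses the primed copy a', b', c' of the same type). -/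
inductive St : Type
  | a | b | c
deriving DecidableEq

instance : Fintype St := ⟨{St.a, St.b, St.c}, fun x => by cases x <;> simp⟩

instance : TopologicalSpace St := ⊥
instance : DiscreteTopology St := ⟨rfl⟩
instance : MeasurableSpace St := ⊤
instance : BorelSpace St := ⟨(borel_eq_top_of_discrete (α := St)).symm⟩

/-- Generator: probability measures of the form
(1 - t - t^2) delta_x + t delta_y + t^2 delta_z for t in the parameter set I. -/
def gen (x y z : St) (I : Set ℝ) : Set (PM St) :=
  {p | ∃ t ∈ I, ((p {x} : NNReal) : ℝ) = 1 - t - t ^ 2 ∧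
    ((p {y} : NNReal) : ℝ) = t ∧ ((p {z} : NNReal) : ℝ) = t ^ 2}

/-- The transition multifunction of the counterexample, for the parameter set I:
Gam(c) = {delta_c}, Gam(a) = conv gen(a,b,c), Gam(b) = conv gen(b,a,c). -/
def Gam (I : Set ℝ) : St → Set (PM St)
  | St.a => convexHullPM (gen St.a St.b St.c I)
  | St.b => convexHullPM (gen St.b St.a St.c I)
  | St.c => {dirac St.c}

/-- The payoff: 0 on the diagonal and 1 off the diagonal. -/
def pay : St × St → ℝ := fun z => if z.1 = z.2 then 0 else 1

/-- The candidate limit value with parameter t: rows a, b equal t on columns a', b',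
equal 1 on column c'; row c identically 0. -/
def limitVal (t : ℝ) : St × St → ℝ := fun z =>
  match z with
  | (St.c, _) => 0
  | (_, St.c) => 1
  | _ => t

end GG

namespace GG

/-!
Excessivity tested against the jumps `(1 - τ - τ²) δ_a + τ δ_b + τ² δ_c`, `τ ∈ I \ {0}`, `τ → 0`,
forces `v(a, ·) = v(b, ·)` at first order in `τ` and `v(c, ·) ≤ v(a, ·)` at second order;
depressivity gives the same for the columns. Since `c` is absorbing, `Γ^∞(c) = {δ_c}`, so P1 and P2
at `(c, c')` and `(a, c')` give `v(c, c') = 0` and `v(a, c') = 1`, and `0 ≤ u ≤ 1` passes to `v`.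

Conversely, `limitVal t` is a row maximum at `a, b` and a column minimum at `a', b'`, which gives
excessivity and depressivity. The witnesses for P1 and P2 are laws on `{a, b}`, reached from `a`
and from `b` by iterating jumps with `τ → 0`, and `δ_c`, reached from every state by iterating a
fixed jump.
-/

section Mass

variable {S : Type*} [MeasurableSpace S]

def mass (p : PM S) (x : S) : ℝ := p {x}

@[simp] lemma coe_dirac (x : S) : (dirac x : Measure S) = Measure.dirac x := rfl

lemma subset_convexHullPM (A : Set (PM S)) : A ⊆ convexHullPM A := fun _ hp _ hT => hT.1 hp

lemma mass_nonneg (p : PM S) (x : S) : 0 ≤ mass p x := (p {x}).coe_nonneg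

lemma mass_eq_toReal (p : PM S) (x : S) : mass p x = ((p : Measure S) {x}).toReal := rfl

lemma mass_of_isMix {t : NNReal} (ht : t ≤ 1) {p q r : PM S} (h : IsMix t p q r) (x : S) :
    mass r x = t * mass p x + (1 - t) * mass q x := by
  rw [mass_eq_toReal, mass_eq_toReal, mass_eq_toReal, h]
  simp only [Measure.add_apply, Measure.smul_apply, smul_eq_mul]
  rw [ENNReal.toReal_add (by finiteness) (by finiteness), ENNReal.toReal_mul, ENNReal.toReal_mul,
    ENNReal.toReal_sub_of_le (by exact_mod_cast ht) (by finiteness)]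
  simp

section Singletons

variable [MeasurableSingletonClass S]

lemma mass_dirac [DecidableEq S] (x y : S) : mass (dirac x) y = if x = y then 1 else 0 := by
  rw [mass_eq_toReal, coe_dirac]
  by_cases h : x = y <;> simp [h]

lemma mass_dirac_self (x : S) : mass (dirac x) x = 1 := by
  classical simp [mass_dirac]

lemma mass_dirac_of_ne {x y : S} (h : x ≠ y) : mass (dirac x) y = 0 := by
  classical simp [mass_dirac, h]

lemma iXY_dirac_dirac {X : Type*} [MeasurableSpace X] [MeasurableSingletonClass X]
    (v : S × X → ℝ) (x : S) (y : X) : iXY v (dirac x) (dirac y) = v (x, y) := by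
  simp [iXY]

end Singletons

variable [Fintype S]

lemma ext_mass {p q : PM S} (h : ∀ x, mass p x = mass q x) : p = q := by
  have := p.2; have := q.2
  refine Subtype.ext (Measure.ext_iff_singleton.mpr fun x => ?_)
  exact (ENNReal.toReal_eq_toReal_iff' (measure_ne_top _ _) (measure_ne_top _ _)).mp (h x)

lemma isMix_of_mass {t : NNReal} (ht : t ≤ 1) {p q r : PM S}
    (h : ∀ x, mass r x = t * mass p x + (1 - t) * mass q x) : IsMix t p q r := by
  refine Measure.ext_iff_singleton.mpr fun x => ?_
  have hx : r {x} = t * p {x} + (1 - t) * q {x} := by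
    apply NNReal.coe_injective
    simpa [mass, NNReal.coe_sub ht] using h x
  simp only [← ProbabilityMeasure.ennreal_coeFn_eq_coeFn_toMeasure, Measure.add_apply,
    Measure.smul_apply, smul_eq_mul, hx]
  push_cast [ENNReal.coe_sub]
  rfl

variable [MeasurableSingletonClass S]

lemma sum_mass (p : PM S) : ∑ x, mass p x = 1 := by
  have h := sum_measure_singleton (μ := (p : Measure S)) (s := Finset.univ)
  simp only [Finset.coe_univ, measure_univ] at h
  simp only [mass_eq_toReal]
  rw [← ENNReal.toReal_sum (fun _ _ => by finiteness), h, ENNReal.toReal_one]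

lemma mass_le_one (p : PM S) (x : S) : mass p x ≤ 1 := by
  rw [← sum_mass p]
  exact Finset.single_le_sum (fun y _ => mass_nonneg p y) (Finset.mem_univ x)

lemma sum_mass_mul_le (p : PM S) {f : S → ℝ} {C : ℝ} (hf : ∀ x, f x ≤ C) :
    ∑ x, mass p x * f x ≤ C :=
  calc ∑ x, mass p x * f x ≤ ∑ x, mass p x * C :=
        Finset.sum_le_sum fun x _ => mul_le_mul_of_nonneg_left (hf x) (mass_nonneg p x)
    _ = C := by rw [← Finset.sum_mul, sum_mass, one_mul]

lemma le_sum_mass_mul (p : PM S) {f : S → ℝ} {C : ℝ} (hf : ∀ x, C ≤ f x) :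
    C ≤ ∑ x, mass p x * f x :=
  calc C = ∑ x, mass p x * C := by rw [← Finset.sum_mul, sum_mass, one_mul]
    _ ≤ ∑ x, mass p x * f x :=
        Finset.sum_le_sum fun x _ => mul_le_mul_of_nonneg_left (hf x) (mass_nonneg p x)

lemma eq_dirac_of_mass_eq_one {p : PM S} {x : S} (h : mass p x = 1) : p = dirac x := by
  classical
  have hrest : ∑ y ∈ Finset.univ.erase x, mass p y = 0 := by
    have := sum_mass p
    rw [← Finset.add_sum_erase _ _ (Finset.mem_univ x), h] at this
    linarith
  refine ext_mass fun y => ?_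
  by_cases hy : y = x
  · rw [hy, h, mass_dirac_self]
  · rw [mass_dirac_of_ne (Ne.symm hy)]
    exact (Finset.sum_eq_zero_iff_of_nonneg (fun z _ => mass_nonneg p z)).mp hrest y
      (Finset.mem_erase.mpr ⟨hy, Finset.mem_univ y⟩)

lemma integral_eq_sum_mass (p : PM S) (f : S → ℝ) :
    ∫ x, f x ∂(p : Measure S) = ∑ x, mass p x * f x := by
  rw [integral_fintype .of_finite]
  rfl

lemma iXY_dirac_right {X : Type*} [MeasurableSpace X] [MeasurableSingletonClass X]
    (v : S × X → ℝ) (p : PM S) (y : X) :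
    iXY v p (dirac y) = ∑ x, mass p x * v (x, y) := by
  simp only [iXY, coe_dirac, integral_dirac]
  exact integral_eq_sum_mass p _

lemma iXY_dirac_left {X : Type*} [MeasurableSpace X] [MeasurableSingletonClass X]
    (v : X × S → ℝ) (x : X) (q : PM S) :
    iXY v (dirac x) q = ∑ y, mass q y * v (x, y) := by
  simp only [iXY, coe_dirac, integral_dirac]
  exact integral_eq_sum_mass q _

def ofMass (w : S → ℝ) (hw : ∀ x, 0 ≤ w x) (hsum : ∑ x, w x = 1) : PM S :=
  ⟨∑ x, ENNReal.ofReal (w x) • Measure.dirac x, ⟨by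
    simp [← ENNReal.ofReal_sum_of_nonneg (fun x _ => hw x), hsum]⟩⟩

lemma mass_ofMass (w : S → ℝ) (hw : ∀ x, 0 ≤ w x) (hsum : ∑ x, w x = 1) (y : S) :
    mass (ofMass w hw hsum) y = w y := by
  classical
  rw [mass_eq_toReal]
  change ((∑ x, ENNReal.ofReal (w x) • Measure.dirac x : Measure S) {y}).toReal = _
  simp [Set.indicator, hw y]

end Mass

section Bind

variable {S : Type*} [MeasurableSpace S] [MeasurableSingletonClass S] [Fintype S]

def bindPM (p : PM S) (k : S → PM S) : PM S :=
  ofMass (fun y => ∑ x, mass p x * mass (k x) y)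
    (fun y => Finset.sum_nonneg fun x _ => mul_nonneg (mass_nonneg p x) (mass_nonneg (k x) y))
    (by rw [Finset.sum_comm]; simp only [← Finset.mul_sum, sum_mass, mul_one])

lemma mass_bindPM (p : PM S) (k : S → PM S) (y : S) :
    mass (bindPM p k) y = ∑ x, mass p x * mass (k x) y :=
  mass_ofMass _ _ _ y

lemma bindPM_dirac (x : S) (k : S → PM S) : bindPM (dirac x) k = k x := by
  classical
  refine ext_mass fun y => ?_
  simp [mass_bindPM, mass_dirac]

/-- Peeling off the atom at `x` writes `p` as `p {x} • δ_x + (1 - p {x}) • p'` with `p'` not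
charging `x`; `bindPM` respects this decomposition, which gives the induction step. -/
lemma bindPM_mem_convexHull2 {Γ : S → Set (PM S)} {k : S → PM S} (hk : ∀ x, k x ∈ Γ x)
    (p : PM S) : (p, bindPM p k) ∈ convexHull2 {z | ∃ x, z.1 = dirac x ∧ z.2 ∈ Γ x} := by
  classical
  rintro T ⟨hgen, hconv⟩
  suffices h : ∀ s : Finset S, ∀ p : PM S, (∀ y ∉ s, mass p y = 0) → (p, bindPM p k) ∈ T from
    h Finset.univ p (by simp)
  intro s
  induction s using Finset.induction_on with
  | empty =>
    intro p hp
    have := sum_mass p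
    simp [hp] at this
  | insert x s hxs ih =>
    intro p hp
    set m := mass p x with hm_def
    by_cases hm : m = 1
    · rw [eq_dirac_of_mass_eq_one hm, bindPM_dirac]
      exact hgen ⟨x, rfl, hk x⟩
    have hm1 : m < 1 := lt_of_le_of_ne (mass_le_one p x) hm
    have hδ : ∀ y, mass (dirac x) y = if x = y then 1 else 0 := mass_dirac x
    have hnum : ∀ y, 0 ≤ mass p y - m * mass (dirac x) y := by
      intro y
      by_cases hy : x = y
      · simp [← hy, hm_def, mass_dirac_self]
      · simpa [hδ, hy] using mass_nonneg p y
    let p' : PM S := ofMass (fun y => (mass p y - m * mass (dirac x) y) / (1 - m))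
      (fun y => div_nonneg (hnum y) (by linarith))
      (by rw [← Finset.sum_div, Finset.sum_sub_distrib, ← Finset.mul_sum, sum_mass, sum_mass,
            mul_one, div_self (by linarith)])
    have hp' : ∀ y, mass p' y = (mass p y - m * mass (dirac x) y) / (1 - m) :=
      mass_ofMass _ _ _
    have hp'T : (p', bindPM p' k) ∈ T := by
      refine ih p' fun y hy => ?_
      by_cases hyx : y = x
      · simp [hp', hδ, hyx, ← hm_def]
      · simp [hp', hδ, Ne.symm hyx, hp y (by simp [hyx, hy])]
    have hdecomp : ∀ y, mass p y = m * mass (dirac x) y + (1 - m) * mass p' y := by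
      intro y
      rw [hp']
      field_simp
      ring
    refine hconv (dirac x, k x) (hgen ⟨x, rfl, hk x⟩) _ hp'T (p {x})
      (ProbabilityMeasure.apply_le_one _ _) (p, bindPM p k)
      (isMix_of_mass (ProbabilityMeasure.apply_le_one _ _) hdecomp)
      (isMix_of_mass (ProbabilityMeasure.apply_le_one _ _) fun y => ?_)
    simp only [mass_bindPM, hdecomp, add_mul, Finset.sum_add_distrib, mul_assoc, ← Finset.mul_sum]
    simp [hδ]
    rfl

end Bind

section Topology

variable {S : Type*} [MeasurableSpace S] [TopologicalSpace S] [OpensMeasurableSpace S]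

lemma tendsto_of_mass [MeasurableSingletonClass S] [Fintype S] {ι : Type*} {l : Filter ι}
    {p : ι → PM S} {q : PM S} (h : ∀ x, Tendsto (fun i => mass (p i) x) l (𝓝 (mass q x))) :
    Tendsto p l (𝓝 q) := by
  rw [ProbabilityMeasure.tendsto_iff_forall_integral_tendsto]
  intro f
  simp only [integral_eq_sum_mass]
  exact tendsto_finsetSum _ fun x _ => (h x).mul_const _

lemma continuous_mass [MeasurableSingletonClass S] [Fintype S] [DiscreteTopology S] (x : S) :
    Continuous fun p : PM S => mass p x := by
  classical
  let f : BoundedContinuousFunction S ℝ :=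
    .mkOfDiscrete (fun y => if y = x then 1 else 0) 1 (fun y z => by
      rw [Real.dist_eq]; split_ifs <;> norm_num)
  convert ProbabilityMeasure.continuous_integral_boundedContinuousFunction f using 2 with p
  simp [f, integral_eq_sum_mass]

lemma dirac_mem_reach (Γ : S → Set (PM S)) (x : S) : dirac x ∈ reach Γ x :=
  subset_closure (mem_iUnion.mpr ⟨0, rfl⟩)

lemma iterate_mem_tIter {Γ : S → Set (PM S)} {f : PM S → PM S} (hf : ∀ p, f p ∈ tStep Γ p) :
    ∀ (n : ℕ) (p : PM S), f^[n] p ∈ tIter Γ n p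
  | 0, _ => rfl
  | n + 1, p => ⟨f p, hf p, iterate_mem_tIter hf n (f p)⟩

lemma bindPM_mem_tStep [MeasurableSingletonClass S] [Fintype S] {Γ : S → Set (PM S)}
    {k : S → PM S} (hk : ∀ x, k x ∈ Γ x) (p : PM S) : bindPM p k ∈ tStep Γ p :=
  subset_closure (bindPM_mem_convexHull2 hk p)

lemma mem_reach_of_tendsto {Γ : S → Set (PM S)} {x : S} {q : PM S} {ι : Type*} {l : Filter ι}
    [l.NeBot] {f : ι → PM S → PM S} {n : ι → ℕ} (hf : ∀ i p, f i p ∈ tStep Γ p)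
    (h : Tendsto (fun i => (f i)^[n i] (dirac x)) l (𝓝 q)) : q ∈ reach Γ x :=
  mem_closure_of_tendsto h (Eventually.of_forall fun i =>
    mem_iUnion.mpr ⟨n i, iterate_mem_tIter (hf i) (n i) (dirac x)⟩)

lemma le_of_mem_reach {Γ : S → Set (PM S)} {φ : PM S → ℝ} (hφ : Continuous φ)
    (haff : ∀ t : NNReal, t ≤ 1 → ∀ p q r, IsMix t p q r → φ r = t * φ p + (1 - t) * φ q)
    (hΓ : ∀ x, ∀ q ∈ Γ x, φ (dirac x) ≤ φ q) {x : S} {q : PM S} (hq : q ∈ reach Γ x) :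
    φ (dirac x) ≤ φ q := by
  have hgraph : tGraph Γ ⊆ {z | φ z.1 ≤ φ z.2} := by
    refine closure_minimal (fun z hz => hz _ ⟨?_, ?_⟩)
      (isClosed_le (hφ.comp continuous_fst) (hφ.comp continuous_snd))
    · rintro _ ⟨y, hy, hz⟩
      simpa [hy] using hΓ y _ hz
    · intro z₁ h₁ z₂ h₂ t ht z hz₁ hz₂
      have ht' : (t : ℝ) ≤ 1 := by exact_mod_cast ht
      simp only [mem_ofPred_eq, haff t ht _ _ _ hz₁, haff t ht _ _ _ hz₂]
      exact add_le_add (mul_le_mul_of_nonneg_left h₁ t.2)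
        (mul_le_mul_of_nonneg_left h₂ (sub_nonneg.2 ht'))
  have hiter : ∀ n p, ∀ r ∈ tIter Γ n p, φ p ≤ φ r := by
    intro n
    induction n with
    | zero => rintro p r rfl; rfl
    | succ n ih =>
      rintro p r ⟨p', hp', hr⟩
      exact (hgraph hp').trans (ih p' r hr)
  refine closure_minimal (fun r hr => ?_) (isClosed_le continuous_const hφ) hq
  obtain ⟨n, hn⟩ := mem_iUnion.mp hr
  exact hiter n _ r hn

end Topology

section Convergence

variable {S : Type*} [MeasurableSpace S] [MeasurableSingletonClass S] [Fintype S]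
  [TopologicalSpace S] [OpensMeasurableSpace S] {ι : Type*} {l : Filter ι} {p : ι → PM S}

lemma tendsto_of_mass_of_ne {q : PM S} (z₀ : S)
    (h : ∀ x ≠ z₀, Tendsto (fun i => mass (p i) x) l (𝓝 (mass q x))) : Tendsto p l (𝓝 q) := by
  classical
  have hrest : ∀ r : PM S, mass r z₀ = 1 - ∑ x ∈ Finset.univ.erase z₀, mass r x := fun r => by
    rw [← sum_mass r, ← Finset.add_sum_erase _ _ (Finset.mem_univ z₀), add_sub_cancel_right]
  refine tendsto_of_mass fun x => ?_
  by_cases hx : x = z₀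
  · simp only [hx, hrest]
    exact tendsto_const_nhds.sub (tendsto_finsetSum _ fun y hy => h y (Finset.ne_of_mem_erase hy))
  · exact h x hx

lemma tendsto_dirac_of_mass_tendsto_one {x : S} (h : Tendsto (fun i => mass (p i) x) l (𝓝 1)) :
    Tendsto p l (𝓝 (dirac x)) := by
  refine tendsto_of_mass_of_ne x fun z hz => ?_
  rw [mass_dirac_of_ne (Ne.symm hz)]
  have hle : ∀ i, mass (p i) z ≤ 1 - mass (p i) x := fun i => by
    classical
    have := Finset.sum_le_sum_of_subset_of_nonneg (Finset.subset_univ {z, x})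
      (fun y _ _ => mass_nonneg (p i) y)
    rw [Finset.sum_pair hz, sum_mass] at this
    linarith
  refine squeeze_zero (fun i => mass_nonneg _ _) hle ?_
  simpa using (tendsto_const_nhds (x := (1 : ℝ))).sub h

end Convergence

section Values

variable {X Y : Type*} [MeasurableSpace X] [MeasurableSingletonClass X] [MeasurableSpace Y]
  [MeasurableSingletonClass Y] {u v : X × Y → ℝ} {C : ℝ}

lemma excessive_of_le {Γ : X → Set (PM X)} (hΓ : ∀ x, dirac x ∈ Γ x)
    (hle : ∀ x y, ∀ p ∈ Γ x, iXY v p (dirac y) ≤ v (x, y)) : Excessive Γ v := fun x y =>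
  ⟨⟨dirac x, hΓ x, iXY_dirac_dirac v x y⟩, by rintro _ ⟨p, hp, rfl⟩; exact hle x y p hp⟩

lemma depressive_of_le {Λ : Y → Set (PM Y)} (hΛ : ∀ y, dirac y ∈ Λ y)
    (hle : ∀ x y, ∀ q ∈ Λ y, v (x, y) ≤ iXY v (dirac x) q) : Depressive Λ v := fun x y =>
  ⟨⟨dirac y, hΛ y, iXY_dirac_dirac v x y⟩, by rintro _ ⟨q, hq, rfl⟩; exact hle x y q hq⟩

lemma le_of_P1 [TopologicalSpace X] [OpensMeasurableSpace X] [Fintype X] {Γ : X → Set (PM X)}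
    (h : P1 Γ u v) (hu : ∀ z, u z ≤ C) (x : X) (y : Y) : v (x, y) ≤ C := by
  obtain ⟨p, -, hv, hvu⟩ := h x y
  rw [hv]
  exact hvu.trans (by rw [iXY_dirac_right]; exact sum_mass_mul_le p fun x' => hu _)

lemma ge_of_P2 [TopologicalSpace Y] [OpensMeasurableSpace Y] [Fintype Y] {Λ : Y → Set (PM Y)}
    (h : P2 Λ u v) (hu : ∀ z, C ≤ u z) (x : X) (y : Y) : C ≤ v (x, y) := by
  obtain ⟨q, -, hv, huv⟩ := h x y
  rw [hv]
  have hCu : C ≤ iXY u (dirac x) q := by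
    rw [iXY_dirac_left]
    exact le_sum_mass_mul q fun y' => hu _
  exact hCu.trans huv

end Values

lemma exists_tendsto_pow {r : ℕ → ℝ} (hr0 : ∀ k, 0 < r k) (hr1 : ∀ k, r k < 1)
    (hr : Tendsto r atTop (𝓝 1)) {L : ℝ} (hL : L ∈ Icc (0 : ℝ) 1) :
    ∃ n : ℕ → ℕ, Tendsto (fun k => r k ^ n k) atTop (𝓝 L) := by
  obtain ⟨m, hm0, hm1, hmL⟩ : ∃ m : ℕ → ℝ, (∀ k, 0 < m k) ∧ (∀ k, m k ≤ 1) ∧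
      Tendsto m atTop (𝓝 L) :=
    ⟨fun k => max L (1 / (k + 1)), fun k => lt_max_of_lt_right Nat.one_div_pos_of_nat,
      fun k => max_le hL.2 ((div_le_one (by positivity)).2 (by simp)), by
        simpa [max_eq_left hL.1] using
          (tendsto_const_nhds (x := L)).max tendsto_one_div_add_atTop_nhds_zero_nat⟩
  choose n hn using fun k => exists_nat_pow_near_of_lt_one (hm0 k) (hm1 k) (hr0 k) (hr1 k)
  refine ⟨fun k => n k + 1, tendsto_of_tendsto_of_tendsto_of_le_of_le (g := fun k => m k * r k)
    (by simpa using hmL.mul hr) hmL (fun k => ?_) (fun k => (hn k).1.le)⟩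
  rw [pow_succ]
  exact mul_le_mul_of_nonneg_right (hn k).2 (hr0 k).le

section Game

open St

lemma St.sum_univ (f : St → ℝ) : ∑ x, f x = f a + f b + f c := by
  rw [show (Finset.univ : Finset St) = {a, b, c} from rfl]
  simp [add_assoc]

def jumpMass (τ : ℝ) : St → St → ℝ
  | a, a | b, b => 1 - τ - τ ^ 2
  | a, b | b, a => τ
  | a, c | b, c => τ ^ 2
  | c, c => 1
  | c, a | c, b => 0

def jump (τ : ℝ) (hτ : τ ∈ Icc (0 : ℝ) (1 / 2)) (x : St) : PM St :=
  ofMass (jumpMass τ x)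
    (fun y => by obtain ⟨h0, h1⟩ := hτ; cases x <;> cases y <;> simp only [jumpMass] <;> nlinarith)
    (by cases x <;> simp only [St.sum_univ, jumpMass] <;> ring)

variable {τ : ℝ} {hτ : τ ∈ Icc (0 : ℝ) (1 / 2)}

lemma mass_jump (x y : St) : mass (jump τ hτ x) y = jumpMass τ x y := mass_ofMass _ _ _ y

lemma jump_mem_Gam {K : Set ℝ} (hτK : τ ∈ K) (x : St) : jump τ hτ x ∈ Gam K x := by
  cases x
  · exact subset_convexHullPM _ ⟨τ, hτK, mass_jump a a, mass_jump a b, mass_jump a c⟩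
  · exact subset_convexHullPM _ ⟨τ, hτK, mass_jump b b, mass_jump b a, mass_jump b c⟩
  · refine (eq_dirac_of_mass_eq_one ?_ : _ = dirac c)
    exact mass_jump c c

lemma dirac_mem_Gam {K : Set ℝ} (hK0 : (0 : ℝ) ∈ K) (x : St) : dirac x ∈ Gam K x := by
  have h0 : (0 : ℝ) ∈ Icc (0 : ℝ) (1 / 2) := left_mem_Icc.mpr (by norm_num)
  have hjump : jump 0 h0 x = dirac x :=
    eq_dirac_of_mass_eq_one (by cases x <;> simp [mass_jump, jumpMass])
  exact hjump ▸ jump_mem_Gam (hτ := h0) hK0 x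

lemma sum_mass_jump_a (f : St → ℝ) :
    ∑ z, mass (jump τ hτ a) z * f z = (1 - τ - τ ^ 2) * f a + τ * f b + τ ^ 2 * f c := by
  simp [St.sum_univ, mass_jump, jumpMass]

lemma sum_mass_jump_b (f : St → ℝ) :
    ∑ z, mass (jump τ hτ b) z * f z = (1 - τ - τ ^ 2) * f b + τ * f a + τ ^ 2 * f c := by
  simp [St.sum_univ, mass_jump, jumpMass]
  ring

lemma reach_Gam_c (K : Set ℝ) : reach (Gam K) c = {dirac c} := by
  refine Subset.antisymm (fun q hq => ?_) (singleton_subset_iff.mpr (dirac_mem_reach _ c))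
  have hΓ : ∀ x, ∀ r ∈ Gam K x, mass (dirac x) c ≤ mass r c := by
    rintro (_ | _ | _) r hr
    · simpa [mass_dirac_of_ne] using mass_nonneg r c
    · simpa [mass_dirac_of_ne] using mass_nonneg r c
    · rw [show r = dirac c from hr]
  have h := le_of_mem_reach (continuous_mass c) (fun t ht _ _ _ h => mass_of_isMix ht h c) hΓ hq
  rw [mass_dirac_self] at h
  exact eq_dirac_of_mass_eq_one (le_antisymm (mass_le_one q c) h)

lemma dirac_c_mem_reach_Gam {K : Set ℝ} (hK : K ⊆ Icc 0 (1 / 2)) (hK0 : (K \ {0}).Nonempty)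
    (x : St) : dirac c ∈ reach (Gam K) x := by
  obtain ⟨τ, hτK, hτ0⟩ := hK0
  have hτ := hK hτK
  replace hτ0 : 0 < τ := lt_of_le_of_ne hτ.1 (Ne.symm hτ0)
  set f : PM St → PM St := fun p => bindPM p (jump τ hτ) with hf
  have hcontract : ∀ p, 1 - mass (f p) c = (1 - τ ^ 2) * (1 - mass p c) := fun p => by
    have := sum_mass p
    simp only [St.sum_univ, hf, mass_bindPM, mass_jump, jumpMass] at this ⊢
    linear_combination (-τ ^ 2) * this
  have hiter : ∀ n, 1 - mass (f^[n] (dirac x)) c = (1 - τ ^ 2) ^ n * (1 - mass (dirac x) c) := by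
    intro n
    induction n with
    | zero => simp
    | succ n ih => rw [Function.iterate_succ_apply', hcontract, ih]; ring
  have hpow : Tendsto (fun n : ℕ => (1 - τ ^ 2) ^ n) atTop (𝓝 0) :=
    tendsto_pow_atTop_nhds_zero_of_lt_one (by nlinarith [hτ.2]) (by nlinarith)
  have hmass : Tendsto (fun n => mass (f^[n] (dirac x)) c) atTop (𝓝 1) := by
    have := (hpow.mul_const (1 - mass (dirac x) c)).const_sub 1
    simp only [← hiter, sub_sub_cancel, zero_mul, sub_zero] at this
    exact this
  exact mem_reach_of_tendsto (f := fun _ => f) (n := id)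
    (fun _ => bindPM_mem_tStep (jump_mem_Gam (hτ := hτ) hτK))
    (tendsto_dirac_of_mass_tendsto_one hmass)

lemma mass_bindPM_update_jump {x : St} (hx : x ≠ c) (p : PM St) :
    mass (bindPM p (Function.update dirac x (jump τ hτ x))) x = (1 - τ - τ ^ 2) * mass p x ∧
    mass (bindPM p (Function.update dirac x (jump τ hτ x))) c = τ ^ 2 * mass p x + mass p c := by
  cases x <;> simp_all [mass_bindPM, St.sum_univ, Function.update_apply, mass_jump, jumpMass,
    mass_dirac, mul_comm]

/-- Each jump out of `x` splits the mass it moves between the other state and `c` in the ratio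
`1 : τ`, so the loss to `c` vanishes as `τ → 0`, while the number of jumps is tuned so that the
mass `(1 - τ - τ²)ⁿ` left at `x` tends to the target. -/
lemma mem_reach_Gam_of_mass_c_eq_zero {K : Set ℝ} (hK0 : (0 : ℝ) ∈ K) (hK : K ⊆ Icc 0 (1 / 2))
    (hacc : (0 : ℝ) ∈ closure (K \ {0})) {x : St} (hx : x ≠ c) {q : PM St}
    (hq : mass q c = 0) : q ∈ reach (Gam K) x := by
  obtain ⟨τ, hτK, hτ0⟩ := mem_closure_iff_seq_limit.mp hacc
  have hτ : ∀ k, τ k ∈ Icc (0 : ℝ) (1 / 2) := fun k => hK (hτK k).1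
  have hτpos : ∀ k, 0 < τ k := fun k => lt_of_le_of_ne (hτ k).1 (Ne.symm (hτK k).2)
  set f : ℕ → PM St → PM St :=
    fun k p => bindPM p (Function.update dirac x (jump (τ k) (hτ k) x)) with hf
  have hstep : ∀ k p, f k p ∈ tStep (Gam K) p := fun k => bindPM_mem_tStep fun z => by
    by_cases hz : z = x
    · subst hz; simpa using jump_mem_Gam (hτ := hτ k) (hτK k).1 z
    · simpa [Function.update_apply, hz] using dirac_mem_Gam hK0 z
  set r : ℕ → ℝ := fun k => 1 - τ k - τ k ^ 2 with hr
  have hiter : ∀ k n, mass ((f k)^[n] (dirac x)) x = r k ^ n ∧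
      (1 + τ k) * mass ((f k)^[n] (dirac x)) c = τ k * (1 - r k ^ n) := by
    intro k n
    induction n with
    | zero => simp [mass_dirac_self, mass_dirac_of_ne hx]
    | succ n ih =>
      obtain ⟨h₁, h₂⟩ := mass_bindPM_update_jump (hτ := hτ k) hx ((f k)^[n] (dirac x))
      rw [Function.iterate_succ_apply', hf]
      simp only at h₁ h₂ ⊢
      rw [h₁, h₂, ih.1, pow_succ]
      constructor
      · ring
      · linear_combination ih.2
  have hr1 : Tendsto r atTop (𝓝 1) := by
    simpa using (tendsto_const_nhds.sub hτ0).sub (hτ0.pow 2)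
  obtain ⟨n, hn⟩ := exists_tendsto_pow (fun k => by nlinarith [(hτ k).2, hτpos k])
    (fun k => by nlinarith [hτpos k]) hr1 ⟨mass_nonneg q x, mass_le_one q x⟩
  refine mem_reach_of_tendsto (l := atTop) (n := n) hstep
    (tendsto_of_mass_of_ne (if x = a then b else a) fun z hz => ?_)
  have hzxc : z = x ∨ z = c := by cases x <;> cases z <;> simp_all
  rcases hzxc with rfl | rfl
  · simpa only [fun k => (hiter k (n k)).1] using hn
  · have hmass : ∀ k, mass ((f k)^[n k] (dirac x)) c = τ k * (1 - r k ^ n k) / (1 + τ k) :=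
      fun k => by rw [eq_div_iff (by linarith [hτpos k]), mul_comm, (hiter k (n k)).2]
    simp only [hmass, hq]
    have := (hτ0.mul (hn.const_sub 1)).div (tendsto_const_nhds (x := (1 : ℝ)).add hτ0)
      (by norm_num)
    rwa [zero_mul, zero_div] at this

lemma pay_nonneg (z : St × St) : 0 ≤ pay z := by unfold pay; split_ifs <;> norm_num

lemma pay_le_one (z : St × St) : pay z ≤ 1 := by unfold pay; split_ifs <;> norm_num

lemma eq_and_le_of_jump_ineq {K : Set ℝ} (hK : K ⊆ Ici 0) (hacc : (0 : ℝ) ∈ closure (K \ {0}))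
    {α β γ : ℝ} (hα : ∀ τ ∈ K, (1 - τ - τ ^ 2) * α + τ * β + τ ^ 2 * γ ≤ α)
    (hβ : ∀ τ ∈ K, (1 - τ - τ ^ 2) * β + τ * α + τ ^ 2 * γ ≤ β) : α = β ∧ γ ≤ α := by
  have hpos : ∀ τ ∈ K \ {0}, 0 < τ := fun τ hτ => lt_of_le_of_ne (hK hτ.1) (Ne.symm hτ.2)
  have key : ∀ {α β : ℝ}, (∀ τ ∈ K, (1 - τ - τ ^ 2) * α + τ * β + τ ^ 2 * γ ≤ α) → β ≤ α := by
    intro α β h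
    have hK' : K \ {0} ⊆ {s : ℝ | β - α + s * (γ - α) ≤ 0} := fun τ hτ =>
      le_of_mul_le_mul_left (a := τ) (by linear_combination h τ hτ.1) (hpos τ hτ)
    simpa using closure_minimal hK' (isClosed_le (by fun_prop) continuous_const) hacc
  have hαβ : α = β := le_antisymm (key hβ) (key hα)
  subst hαβ
  obtain ⟨τ, hτ⟩ := closure_nonempty_iff.mp ⟨0, hacc⟩
  exact ⟨rfl, le_of_mul_le_mul_left (a := τ ^ 2) (by linear_combination hα τ hτ.1)
    (pow_pos (hpos τ hτ) 2)⟩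

lemma rows_of_excessive {I : Set ℝ} (hI : I ⊆ Icc 0 (1 / 2)) (hacc : (0 : ℝ) ∈ closure (I \ {0}))
    {v : St × St → ℝ} (hE : Excessive (Gam I) v) (y : St) :
    v (a, y) = v (b, y) ∧ v (c, y) ≤ v (a, y) := by
  refine eq_and_le_of_jump_ineq (fun τ hτ => (hI hτ).1) hacc (fun τ hτ => ?_) (fun τ hτ => ?_)
  · have h : iXY v (jump τ (hI hτ) a) (dirac y) ≤ v (a, y) :=
      (hE a y).2 ⟨_, jump_mem_Gam hτ a, rfl⟩
    rwa [iXY_dirac_right, sum_mass_jump_a] at h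
  · have h : iXY v (jump τ (hI hτ) b) (dirac y) ≤ v (b, y) :=
      (hE b y).2 ⟨_, jump_mem_Gam hτ b, rfl⟩
    rwa [iXY_dirac_right, sum_mass_jump_b] at h

lemma cols_of_depressive {J : Set ℝ} (hJ : J ⊆ Icc 0 (1 / 2))
    (hacc : (0 : ℝ) ∈ closure (J \ {0})) {v : St × St → ℝ} (hD : Depressive (Gam J) v) (x : St) :
    v (x, a) = v (x, b) ∧ v (x, a) ≤ v (x, c) := by
  have h := eq_and_le_of_jump_ineq (α := -v (x, a)) (β := -v (x, b)) (γ := -v (x, c))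
    (fun τ hτ => (hJ hτ).1) hacc (fun τ hτ => ?_) (fun τ hτ => ?_)
  · exact ⟨neg_inj.mp h.1, neg_le_neg_iff.mp h.2⟩
  · have h : v (x, a) ≤ iXY v (dirac x) (jump τ (hJ hτ) a) :=
      (hD x a).2 ⟨_, jump_mem_Gam hτ a, rfl⟩
    rw [iXY_dirac_left, sum_mass_jump_a] at h
    linarith
  · have h : v (x, b) ≤ iXY v (dirac x) (jump τ (hJ hτ) b) :=
      (hD x b).2 ⟨_, jump_mem_Gam hτ b, rfl⟩
    rw [iXY_dirac_left, sum_mass_jump_b] at h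
    linarith

lemma exists_eq_limitVal {I J : Set ℝ} (hI : I ⊆ Icc 0 (1 / 2))
    (hIacc : (0 : ℝ) ∈ closure (I \ {0})) (hJ : J ⊆ Icc 0 (1 / 2))
    (hJacc : (0 : ℝ) ∈ closure (J \ {0})) {v : St × St → ℝ} (hE : Excessive (Gam I) v)
    (hD : Depressive (Gam J) v) (hP1 : P1 (Gam I) pay v) (hP2 : P2 (Gam J) pay v) :
    ∃ t ∈ Icc (0 : ℝ) 1, v = limitVal t := by
  have hv1 := le_of_P1 hP1 pay_le_one
  have hv0 := ge_of_P2 hP2 pay_nonneg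
  have hcc : v (c, c) ≤ 0 := by
    obtain ⟨p, hp, hv, hvu⟩ := hP1 c c
    rw [reach_Gam_c, mem_singleton_iff] at hp
    subst hp
    simpa [iXY_dirac_dirac, pay] using hv.trans_le hvu
  have hac : 1 ≤ v (a, c) := by
    obtain ⟨q, hq, hv, huv⟩ := hP2 a c
    rw [reach_Gam_c, mem_singleton_iff] at hq
    subst hq
    simpa [iXY_dirac_dirac, pay] using huv.trans_eq hv.symm
  obtain ⟨hrow_a, -⟩ := rows_of_excessive hI hIacc hE a
  obtain ⟨hrow_b, -⟩ := rows_of_excessive hI hIacc hE b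
  obtain ⟨hrow_c, -⟩ := rows_of_excessive hI hIacc hE c
  obtain ⟨hcol_a, -⟩ := cols_of_depressive hJ hJacc hD a
  obtain ⟨hcol_c, hcol_c'⟩ := cols_of_depressive hJ hJacc hD c
  refine ⟨v (a, a), ⟨hv0 a a, hv1 a a⟩, funext fun ⟨x, y⟩ => ?_⟩
  cases x <;> cases y <;> simp only [limitVal] <;> linarith [hv0 c a, hv1 a c]

def abMass (s : ℝ) : St → ℝ
  | a => s
  | b => 1 - s
  | c => 0

def abPM (s : ℝ) (hs : s ∈ Icc (0 : ℝ) 1) : PM St :=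
  ofMass (abMass s) (fun z => by cases z <;> simp [abMass, hs.1, hs.2])
    (by simp [St.sum_univ, abMass])

lemma mass_abPM (s : ℝ) (hs : s ∈ Icc (0 : ℝ) 1) (z : St) : mass (abPM s hs) z = abMass s z :=
  mass_ofMass _ _ _ z

section LimitVal

variable {K : Set ℝ} {t : ℝ}

lemma excessive_limitVal (hK0 : (0 : ℝ) ∈ K) (ht : t ∈ Icc (0 : ℝ) 1) :
    Excessive (Gam K) (limitVal t) := by
  refine excessive_of_le (dirac_mem_Gam hK0) fun x y p hp => ?_
  by_cases hx : x = c
  · subst hx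
    rw [show p = dirac c from hp, iXY_dirac_dirac]
  · rw [iXY_dirac_right]
    exact sum_mass_mul_le p fun x' => by
      cases x <;> cases x' <;> cases y <;> simp_all [limitVal]

lemma depressive_limitVal (hK0 : (0 : ℝ) ∈ K) (ht : t ∈ Icc (0 : ℝ) 1) :
    Depressive (Gam K) (limitVal t) := by
  refine depressive_of_le (dirac_mem_Gam hK0) fun x y q hq => ?_
  by_cases hy : y = c
  · subst hy
    rw [show q = dirac c from hq, iXY_dirac_dirac]
  · rw [iXY_dirac_left]
    exact le_sum_mass_mul q fun y' => by
      cases x <;> cases y <;> cases y' <;> simp_all [limitVal]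

lemma P1_limitVal (hK0 : (0 : ℝ) ∈ K) (hK : K ⊆ Icc 0 (1 / 2))
    (hacc : (0 : ℝ) ∈ closure (K \ {0})) (ht : t ∈ Icc (0 : ℝ) 1) :
    P1 (Gam K) pay (limitVal t) := by
  intro x y
  by_cases hxy : x = c ∨ y = c
  · refine ⟨dirac x, dirac_mem_reach _ x, ?_⟩
    simp only [iXY_dirac_dirac, true_and]
    cases x <;> cases y <;> simp_all [limitVal, pay]
  push Not at hxy
  obtain ⟨hx, hy⟩ := hxy
  have hab : ∀ s (hs : s ∈ Icc (0 : ℝ) 1), abPM s hs ∈ reach (Gam K) x :=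
    fun s hs => mem_reach_Gam_of_mass_c_eq_zero hK0 hK hacc hx (mass_abPM s hs c)
  have h1t : 1 - t ∈ Icc (0 : ℝ) 1 := ⟨by linarith [ht.2], by linarith [ht.1]⟩
  -- the witness puts mass `t` off `y`, where `pay (·, y) = 1`
  cases y
  · refine ⟨abPM (1 - t) h1t, hab _ _, ?_⟩
    simp only [iXY_dirac_right, St.sum_univ, mass_abPM]
    cases x <;> simp_all [abMass, limitVal, pay] <;> exact ⟨by ring, le_of_eq (by ring)⟩
  · refine ⟨abPM t ht, hab _ _, ?_⟩
    simp only [iXY_dirac_right, St.sum_univ, mass_abPM]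
    cases x <;> simp_all [abMass, limitVal, pay] <;> exact ⟨by ring, le_of_eq (by ring)⟩
  · exact absurd rfl hy

lemma P2_limitVal (hK0 : (0 : ℝ) ∈ K) (hK : K ⊆ Icc 0 (1 / 2))
    (hacc : (0 : ℝ) ∈ closure (K \ {0})) (ht : t ∈ Icc (0 : ℝ) 1) :
    P2 (Gam K) pay (limitVal t) := by
  intro x y
  by_cases hy : y = c
  · subst hy
    refine ⟨dirac c, dirac_mem_reach _ c, ?_⟩
    cases x <;> simp [iXY_dirac_dirac, limitVal, pay]
  by_cases hx : x = c
  · subst hx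
    refine ⟨dirac c, dirac_c_mem_reach_Gam hK (closure_nonempty_iff.mp ⟨0, hacc⟩) y, ?_⟩
    cases y <;> simp_all [iXY_dirac_dirac, limitVal, pay]
  have hab : ∀ s (hs : s ∈ Icc (0 : ℝ) 1), abPM s hs ∈ reach (Gam K) y :=
    fun s hs => mem_reach_Gam_of_mass_c_eq_zero hK0 hK hacc hy (mass_abPM s hs c)
  have h1t : 1 - t ∈ Icc (0 : ℝ) 1 := ⟨by linarith [ht.2], by linarith [ht.1]⟩
  -- the witness puts mass `t` off `x`, where `pay (x, ·) = 1`
  cases x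
  · refine ⟨abPM (1 - t) h1t, hab _ _, ?_⟩
    simp only [iXY_dirac_left, St.sum_univ, mass_abPM]
    cases y <;> simp_all [abMass, limitVal, pay] <;> exact ⟨by ring, le_of_eq (by ring)⟩
  · refine ⟨abPM t ht, hab _ _, ?_⟩
    simp only [iXY_dirac_left, St.sum_univ, mass_abPM]
    cases y <;> simp_all [abMass, limitVal, pay] <;> exact ⟨by ring, le_of_eq (by ring)⟩
  · exact absurd rfl hx

end LimitVal

end Game

theorem statement8_general
    (I J : Set ℝ)
    (hIsub : I ⊆ Set.Icc 0 (1 / 2)) (hI0 : (0 : ℝ) ∈ I)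
    (hJsub : J ⊆ Set.Icc 0 (1 / 2)) (hJ0 : (0 : ℝ) ∈ J)
    (hIacc : (0 : ℝ) ∈ closure (I \ {0}))
    (hJacc : (0 : ℝ) ∈ closure (J \ {0}))
    (v : St × St → ℝ) :
    (Excessive (Gam I) v ∧ Depressive (Gam J) v ∧
      P1 (Gam I) pay v ∧ P2 (Gam J) pay v) ↔
    (∃ t ∈ Set.Icc (0 : ℝ) 1,
      v (St.a, St.a) = t ∧ v (St.a, St.b) = t ∧
      v (St.b, St.a) = t ∧ v (St.b, St.b) = t ∧
      v (St.a, St.c) = 1 ∧ v (St.b, St.c) = 1 ∧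
      v (St.c, St.a) = 0 ∧ v (St.c, St.b) = 0 ∧ v (St.c, St.c) = 0) := by
  constructor
  · rintro ⟨hE, hD, hP1, hP2⟩
    obtain ⟨t, ht, rfl⟩ := exists_eq_limitVal hIsub hIacc hJsub hJacc hE hD hP1 hP2
    exact ⟨t, ht, rfl, rfl, rfl, rfl, rfl, rfl, rfl, rfl, rfl⟩
  · rintro ⟨t, ht, haa, hab, hba, hbb, hac, hbc, hca, hcb, hcc⟩
    obtain rfl : v = limitVal t := by
      funext ⟨x, y⟩
      cases x <;> cases y <;> assumption
    exact ⟨excessive_limitVal hI0 ht, depressive_limitVal hJ0 ht,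
      P1_limitVal hI0 hIsub hIacc ht, P2_limitVal hJ0 hJsub hJacc ht⟩

/-- in the three-state counterexample game, assuming 0 is an accumulation
point of both parameter sets, a function v is excessive, depressive and satisfies P1 and
P2 if and only if it is of the form limitVal t for some t in [0,1]. -/
theorem statement8
    (I J : Set ℝ)
    (hIc : IsCompact I) (hIsub : I ⊆ Set.Icc 0 (1 / 2)) (hI0 : (0 : ℝ) ∈ I)
    (hJc : IsCompact J) (hJsub : J ⊆ Set.Icc 0 (1 / 2)) (hJ0 : (0 : ℝ) ∈ J)
    (hIacc : (0 : ℝ) ∈ closure (I \ {0}))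
    (hJacc : (0 : ℝ) ∈ closure (J \ {0}))
    (v : St × St → ℝ) :
    (Excessive (Gam I) v ∧ Depressive (Gam J) v ∧
      P1 (Gam I) pay v ∧ P2 (Gam J) pay v) ↔
    (∃ t ∈ Set.Icc (0 : ℝ) 1,
      v (St.a, St.a) = t ∧ v (St.a, St.b) = t ∧
      v (St.b, St.a) = t ∧ v (St.b, St.b) = t ∧
      v (St.a, St.c) = 1 ∧ v (St.b, St.c) = 1 ∧
      v (St.c, St.a) = 0 ∧ v (St.c, St.b) = 0 ∧ v (St.c, St.c) = 0) :=
  statement8_general I J hIsub hI0 hJsub hJ0 hIacc hJacc v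

end GG
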